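/- (Critical Value Lemma) Let F : (ℝ,≤) → Vec be an (ℝ,≤)-indexed diagram of finite-dimensional vector spaces and let I ⊆ ℝ be an interval. If I contains no critical values of F, then F is constant on I, i.e., F(a ≤ b) is an isomorphism for all a ≤ b in I. -/

import Mathlib

open CategoryTheory Limits

noncomputable section

variable (𝕜 : Type) [Field 𝕜]

open Classical in
/-- The value of the interval module `χ_I` at `a : ℝ`: the field `𝕜` (as the full submodule
of itself) if `a ∈ I`, and `0` (the trivial submodule) otherwise. -/
def chiObj (I : Set ℝ) (a : ℝ) : Submodule 𝕜 𝕜 :=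
  if a ∈ I then ⊤ else ⊥

open Classical in
/-- The structure map of the interval module `χ_I`: the identity of `𝕜` if `a, b ∈ I`,
and `0` otherwise. -/
def chiMap (I : Set ℝ) {a b : ℝ} (_ : a ≤ b) :
    chiObj 𝕜 I a →ₗ[𝕜] chiObj 𝕜 I b :=
  if h : chiObj 𝕜 I a ≤ chiObj 𝕜 I b then Submodule.inclusion h else 0

open Classical in
lemma chiMap_val (I : Set ℝ) {a b : ℝ} (hab : a ≤ b) (x : chiObj 𝕜 I a) :
    (chiMap 𝕜 I hab x : 𝕜) = if b ∈ I then (x : 𝕜) else 0 := by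
  by_cases hb : b ∈ I
  · have h : chiObj 𝕜 I a ≤ chiObj 𝕜 I b := by
      unfold chiObj
      rw [if_pos hb]
      exact le_top
    rw [chiMap, dif_pos h, if_pos hb]
    rfl
  · rw [if_neg hb]
    by_cases ha : a ∈ I
    · have h : ¬ chiObj 𝕜 I a ≤ chiObj 𝕜 I b := by
        simp only [chiObj, if_pos ha, if_neg hb]
        intro h
        have := h (Submodule.mem_top (x := (1 : 𝕜)))
        exact one_ne_zero ((Submodule.mem_bot 𝕜).mp this)
      rw [chiMap, dif_neg h]
      rfl
    · have hx : (x : 𝕜) = 0 := by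
        have h2 : chiObj 𝕜 I a = ⊥ := by
          unfold chiObj
          rw [if_neg ha]
        exact (Submodule.mem_bot 𝕜).mp (h2.le x.2)
      by_cases h : chiObj 𝕜 I a ≤ chiObj 𝕜 I b
      · rw [chiMap, dif_pos h]
        simpa [Submodule.inclusion] using hx
      · rw [chiMap, dif_neg h]
        rfl

lemma chiMap_id (I : Set ℝ) (a : ℝ) :
    chiMap 𝕜 I (le_refl a) = LinearMap.id := by
  apply LinearMap.ext
  intro x
  apply Subtype.ext
  rw [chiMap_val]
  classical
  by_cases ha : a ∈ I
  · rw [if_pos ha]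
    rfl
  · rw [if_neg ha]
    have := x.2
    simp only [chiObj, if_neg ha] at this
    have hx := (Submodule.mem_bot 𝕜).mp this
    simp [hx]

lemma chiMap_comp (I : Set ℝ) (hI : I.OrdConnected) {a b c : ℝ} (hab : a ≤ b) (hbc : b ≤ c) :
    chiMap 𝕜 I hbc ∘ₗ chiMap 𝕜 I hab = chiMap 𝕜 I (hab.trans hbc) := by
  apply LinearMap.ext
  intro x
  apply Subtype.ext
  show (chiMap 𝕜 I hbc (chiMap 𝕜 I hab x) : 𝕜) = (chiMap 𝕜 I (hab.trans hbc) x : 𝕜)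
  rw [chiMap_val, chiMap_val, chiMap_val]
  classical
  by_cases hc : c ∈ I
  · rw [if_pos hc, if_pos hc]
    by_cases hb : b ∈ I
    · rw [if_pos hb]
    · rw [if_neg hb]
      by_cases ha : a ∈ I
      · exact absurd (hI.out ha hc ⟨hab, hbc⟩) hb
      · have := x.2
        simp only [chiObj, if_neg ha, Submodule.mem_bot] at this
        simp [this]
  · rw [if_neg hc, if_neg hc]

/-- The interval module (diagram) `χ_I : (ℝ,≤) ⥤ Vec` associated to an interval `I ⊆ ℝ`
(`Vec` is the category of finite-dimensional `𝕜`-vector spaces): it is `𝕜` on `I` with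
identity structure maps, and `0` elsewhere. -/
def chi (I : Set ℝ) (hI : I.OrdConnected) : ℝ ⥤ FGModuleCat 𝕜 where
  obj a := FGModuleCat.of 𝕜 (chiObj 𝕜 I a)
  map {a b} h := FGModuleCat.ofHom (chiMap 𝕜 I (leOfHom h))
  map_id a := FGModuleCat.hom_ext (chiMap_id 𝕜 I a)
  map_comp {a b c} h h' := FGModuleCat.hom_ext (chiMap_comp 𝕜 I hI (leOfHom h) (leOfHom h')).symm

end

/-- `F` is constant on `I` if all the structure maps `F(a ≤ b)` for `a, b ∈ I`
are isomorphisms. -/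
def ConstantOn {𝕜 : Type} [Field 𝕜] (F : ℝ ⥤ FGModuleCat 𝕜) (I : Set ℝ) : Prop :=
  ∀ (a b : ℝ), a ∈ I → b ∈ I → ∀ h : a ≤ b, CategoryTheory.IsIso (F.map (CategoryTheory.homOfLE h))

/-- `a` is a regular value of `F` if `F` is constant on some open interval containing `a`. -/
def IsRegularValue {𝕜 : Type} [Field 𝕜] (F : ℝ ⥤ FGModuleCat 𝕜) (a : ℝ) : Prop :=
  ∃ u v : ℝ, u < a ∧ a < v ∧ ConstantOn F (Set.Ioo u v)

/-- `a` is a critical value of `F` if it is not a regular value. -/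
def IsCriticalValue {𝕜 : Type} [Field 𝕜] (F : ℝ ⥤ FGModuleCat 𝕜) (a : ℝ) : Prop :=
  ¬ IsRegularValue F a

/-- Critical Value Lemma: if an interval `I` contains no critical values of `F`,
then `F` is constant on `I`. -/
theorem criticalValueLemma {𝕜 : Type} [Field 𝕜] (F : ℝ ⥤ FGModuleCat 𝕜)
    (I : Set ℝ) (hI : I.OrdConnected)
    (h : ∀ a ∈ I, ¬ IsCriticalValue F a) : ConstantOn F I := by
  intro a b ha hb hab
  set T : Set ℝ := {x | ∃ h1 : a ≤ x, x ≤ b ∧ CategoryTheory.IsIso (F.map (CategoryTheory.homOfLE h1))} with hT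
  have haT : a ∈ T := by
    refine ⟨le_refl a, hab, ?_⟩
    have : CategoryTheory.homOfLE (le_refl a) = 𝟙 a := rfl
    rw [this, F.map_id]
    infer_instance
  have hbdd : BddAbove T := ⟨b, fun x hx => hx.2.1⟩
  have hne : T.Nonempty := ⟨a, haT⟩
  set c := sSup T with hc
  have hac : a ≤ c := le_csSup hbdd haT
  have hcb : c ≤ b := csSup_le hne fun x hx => hx.2.1
  have hcI : c ∈ I := hI.out ha hb ⟨hac, hcb⟩
  obtain ⟨u, v, huc, hcv, hconst⟩ := not_not.mp (h c hcI)
  obtain ⟨y, hyT, huy⟩ := exists_lt_of_lt_csSup hne huc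
  obtain ⟨hay, hyb, hiso⟩ := hyT
  have hyc : y ≤ c := le_csSup hbdd ⟨hay, hyb, hiso⟩
  have hyv : y < v := lt_of_le_of_lt hyc hcv
  by_cases hbv : b < v
  · have iso2 := hconst y b ⟨huy, hyv⟩ ⟨lt_of_lt_of_le huy hyb, hbv⟩ hyb
    have key : F.map (CategoryTheory.homOfLE hab)
        = F.map (CategoryTheory.homOfLE hay) ≫ F.map (CategoryTheory.homOfLE hyb) := by
      rw [← F.map_comp, CategoryTheory.homOfLE_comp]
    rw [key]
    exact CategoryTheory.IsIso.comp_isIso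
  · push_neg at hbv
    exfalso
    set x := (c + v) / 2 with hx
    have hcx : c < x := by
      rw [hx]; linarith
    have hxv : x < v := by
      rw [hx]; linarith
    have hyx : y ≤ x := le_of_lt (lt_of_le_of_lt hyc hcx)
    have hax : a ≤ x := le_trans hay hyx
    have hxb : x ≤ b := le_of_lt (lt_of_lt_of_le hxv hbv)
    have iso2 := hconst y x ⟨huy, hyv⟩ ⟨lt_of_lt_of_le huy hyx, hxv⟩ hyx
    have hxT : x ∈ T := by
      refine ⟨hax, hxb, ?_⟩
      have key : F.map (CategoryTheory.homOfLE hax)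
          = F.map (CategoryTheory.homOfLE hay) ≫ F.map (CategoryTheory.homOfLE hyx) := by
        rw [← F.map_comp, CategoryTheory.homOfLE_comp]
      rw [key]
      exact CategoryTheory.IsIso.comp_isIso
    exact absurd (le_csSup hbdd hxT) (not_le.mpr hcx)
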